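/- Let (X,d) be a compact metric space and let (X, f_{1,∞}) be a non-autonomous discrete system. If f_{1,∞} is mildly mixing, then f_{1,∞} is multi-transitive. -/

import Mathlib

open Set Filter

/-- `nds f i n` is the `n`-step composition `f_i^n = f (i+n-1) ∘ ⋯ ∘ f i`, with `nds f i 0 = id`. -/
def nds {X : Type*} (f : ℕ → X → X) (i : ℕ) : ℕ → X → X
  | 0 => id
  | n + 1 => f (i + n) ∘ nds f i n

section TopDefs

variable {X : Type*} [TopologicalSpace X]

/-- The NDS `f_{1,∞}` is (topologically) transitive. -/
def NDSTransitive (f : ℕ → X → X) : Prop :=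
  ∀ U V : Set X, IsOpen U → U.Nonempty → IsOpen V → V.Nonempty →
    ∃ n : ℕ, 0 < n ∧ (nds f 1 n '' U ∩ V).Nonempty

/-- The NDS `f_{1,∞}` is mixing. -/
def NDSMixing (f : ℕ → X → X) : Prop :=
  ∀ U V : Set X, IsOpen U → U.Nonempty → IsOpen V → V.Nonempty →
    ∃ N : ℕ, ∀ n : ℕ, N ≤ n → (nds f 1 n '' U ∩ V).Nonempty

/-- The NDS `f_{1,∞}` is weakly mixing. -/
def NDSWeaklyMixing (f : ℕ → X → X) : Prop :=
  ∀ U₁ U₂ V₁ V₂ : Set X, IsOpen U₁ → U₁.Nonempty → IsOpen U₂ → U₂.Nonempty →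
    IsOpen V₁ → V₁.Nonempty → IsOpen V₂ → V₂.Nonempty →
    ∃ n : ℕ, 0 < n ∧ (nds f 1 n '' U₁ ∩ V₁).Nonempty ∧ (nds f 1 n '' U₂ ∩ V₂).Nonempty

/-- The NDS `f_{1,∞}` is multi-transitive. -/
def NDSMultiTransitive (f : ℕ → X → X) : Prop :=
  ∀ m : ℕ, 0 < m → ∀ U V : Fin m → Set X,
    (∀ j, IsOpen (U j)) → (∀ j, (U j).Nonempty) →
    (∀ j, IsOpen (V j)) → (∀ j, (V j).Nonempty) →
    ∃ l : ℕ, 0 < l ∧ ∀ j : Fin m, (nds f 1 (l * (j.1 + 1)) '' U j ∩ V j).Nonempty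

/-- The NDS `f_{1,∞}` is totally transitive. -/
def NDSTotallyTransitive (f : ℕ → X → X) : Prop :=
  ∀ k : ℕ, 0 < k → ∀ U V : Set X, IsOpen U → U.Nonempty → IsOpen V → V.Nonempty →
    ∃ n : ℕ, 0 < n ∧ (nds f 1 (n * k) '' U ∩ V).Nonempty

/-- The NDS `f_{1,∞}` is minimal: every orbit is dense. -/
def NDSMinimal (f : ℕ → X → X) : Prop :=
  ∀ x : X, Dense (Set.range fun n : ℕ => nds f 1 n x)

/-- The NDS `f_{1,∞}` is feeble open. -/
def FeebleOpen (f : ℕ → X → X) : Prop :=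
  ∀ i : ℕ, 1 ≤ i → ∀ U : Set X, IsOpen U → U.Nonempty → (interior (f i '' U)).Nonempty

/-- A set of positive integers is syndetic (has bounded gaps). -/
def SyndeticSet (A : Set ℕ) : Prop :=
  ∃ M : ℕ, ∀ i : ℕ, 1 ≤ i → ∃ j ∈ A, i ≤ j ∧ j ≤ i + M

/-- A set of positive integers is thick (contains arbitrarily long runs). -/
def ThickSet (A : Set ℕ) : Prop :=
  ∀ p : ℕ, ∃ n : ℕ, ∀ j : ℕ, n ≤ j → j ≤ n + p → j ∈ A

/-- The NDS `f_{1,∞}` is syndetically transitive. -/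
def NDSSyndeticallyTransitive (f : ℕ → X → X) : Prop :=
  ∀ U V : Set X, IsOpen U → U.Nonempty → IsOpen V → V.Nonempty →
    SyndeticSet {n : ℕ | 0 < n ∧ (nds f 1 n '' U ∩ V).Nonempty}

/-- The NDS `f_{1,∞}` has dense periodic points. -/
def NDSDensePeriodicPoints (f : ℕ → X → X) : Prop :=
  Dense {x : X | ∃ k : ℕ, 0 < k ∧ ∀ n : ℕ, 0 < n → nds f 1 (k * n) x = x}

/-- The NDS `f_{k,∞}` is strongly transitive. -/
def NDSStronglyTransitiveFrom (f : ℕ → X → X) (k : ℕ) : Prop :=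
  ∀ U : Set X, IsOpen U → U.Nonempty →
    ∃ M : ℕ, 0 < M ∧ (⋃ i ∈ Set.Icc 1 M, nds f k i '' U) = Set.univ

/-- An autonomous map is transitive. -/
def MapTransitive {Y : Type*} [TopologicalSpace Y] (g : Y → Y) : Prop :=
  ∀ U V : Set Y, IsOpen U → U.Nonempty → IsOpen V → V.Nonempty →
    ∃ n : ℕ, 0 < n ∧ (g^[n] '' U ∩ V).Nonempty

/-- An autonomous map is weakly mixing. -/
def MapWeaklyMixing {Y : Type*} [TopologicalSpace Y] (g : Y → Y) : Prop :=
  ∀ U₁ U₂ V₁ V₂ : Set Y, IsOpen U₁ → U₁.Nonempty → IsOpen U₂ → U₂.Nonempty →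
    IsOpen V₁ → V₁.Nonempty → IsOpen V₂ → V₂.Nonempty →
    ∃ n : ℕ, 0 < n ∧ (g^[n] '' U₁ ∩ V₁).Nonempty ∧ (g^[n] '' U₂ ∩ V₂).Nonempty

/-- An autonomous map is totally transitive. -/
def MapTotallyTransitive {Y : Type*} [TopologicalSpace Y] (g : Y → Y) : Prop :=
  ∀ k : ℕ, 0 < k → ∀ U V : Set Y, IsOpen U → U.Nonempty → IsOpen V → V.Nonempty →
    ∃ n : ℕ, 0 < n ∧ (g^[n * k] '' U ∩ V).Nonempty

/-- An autonomous map is syndetically transitive. -/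
def MapSyndeticallyTransitive {Y : Type*} [TopologicalSpace Y] (g : Y → Y) : Prop :=
  ∀ U V : Set Y, IsOpen U → U.Nonempty → IsOpen V → V.Nonempty →
    SyndeticSet {n : ℕ | 0 < n ∧ (g^[n] '' U ∩ V).Nonempty}

/-- An autonomous map is minimal. -/
def MapMinimal {Y : Type*} [TopologicalSpace Y] (g : Y → Y) : Prop :=
  ∀ x : Y, Dense (Set.range fun n : ℕ => g^[n] x)

end TopDefs

section MetricDefs

variable {X : Type*} [MetricSpace X]

/-- The compositions `(f_r^k)` converge collectively to `(f^k)` (w.r.t. the supremum metric). -/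
def CollectivelyConverges (f : ℕ → X → X) (g : X → X) : Prop :=
  ∀ ε : ℝ, 0 < ε → ∃ r₀ : ℕ, ∀ r : ℕ, r₀ ≤ r → ∀ k : ℕ, 1 ≤ k → ∀ x : X,
    dist (nds f r k x) (g^[k] x) < ε

/-- `N(U, δ)`: the times at which the NDS is `δ`-sensitive on `U`. -/
def SensSet (f : ℕ → X → X) (U : Set X) (δ : ℝ) : Set ℕ :=
  {n : ℕ | 0 < n ∧ ∃ x ∈ U, ∃ y ∈ U, δ < dist (nds f 1 n x) (nds f 1 n y)}

/-- The NDS `f_{1,∞}` is multi-sensitive. -/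
def NDSMultiSensitive (f : ℕ → X → X) : Prop :=
  ∃ δ : ℝ, 0 < δ ∧ ∀ m : ℕ, 0 < m → ∀ U : Fin m → Set X,
    (∀ i, IsOpen (U i)) → (∀ i, (U i).Nonempty) → (⋂ i, SensSet f (U i) δ).Nonempty

/-- The NDS `f_{1,∞}` is thickly sensitive. -/
def NDSThicklySensitive (f : ℕ → X → X) : Prop :=
  ∃ δ : ℝ, 0 < δ ∧ ∀ U : Set X, IsOpen U → U.Nonempty → ThickSet (SensSet f U δ)

/-- The NDS `f_{1,∞}` is syndetically sensitive. -/
def NDSSyndeticallySensitive (f : ℕ → X → X) : Prop :=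
  ∃ δ : ℝ, 0 < δ ∧ ∀ U : Set X, IsOpen U → U.Nonempty → SyndeticSet (SensSet f U δ)

/-- The NDS `f_{1,∞}` is mildly mixing: its product with every transitive NDS on a compact
metric space is transitive. -/
def NDSMildlyMixing (f : ℕ → X → X) : Prop :=
  ∀ (Y : Type*) [MetricSpace Y] [CompactSpace Y] (g : ℕ → Y → Y),
    (∀ n : ℕ, 1 ≤ n → Continuous (g n)) → NDSTransitive g →
    NDSTransitive (fun n (p : X × Y) => (f n p.1, g n p.2))

/-- The NDS `f_{1,∞}` is Li–Yorke chaotic. -/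
def LiYorkeChaotic (f : ℕ → X → X) : Prop :=
  ∃ S : Set X, ¬S.Countable ∧ ∀ x ∈ S, ∀ y ∈ S, x ≠ y →
    Filter.liminf (fun n : ℕ => dist (nds f 1 n x) (nds f 1 n y)) Filter.atTop = 0 ∧
    0 < Filter.limsup (fun n : ℕ => dist (nds f 1 n x) (nds f 1 n y)) Filter.atTop

end MetricDefs

/-!
By induction on `m`, for all positive speeds `c₀, …, c_{m-1}` the NDS on `X^m` running `f` in
blocks of `c_j` steps on the `j`-th coordinate is transitive; the speeds `1, …, m` give
multi-transitivity. For the step, slow the NDS `S` of the speeds `c₁, …` down by `K = c₀` (its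
`l`-th map acts at time `lK`, the identity otherwise) and couple it with the rotation `t ↦ t + 1`
of `Fin K`; this is still transitive. Mild mixing makes its product with `f` transitive, and the
rotation coordinate forces every return time to be a multiple `lK`, at which `f` has run `l · c₀`
steps and `S` has run `l` steps.
-/

section Iterates

variable {X Y : Type*}

theorem nds_add (f : ℕ → X → X) (i a b : ℕ) :
    nds f i (a + b) = nds f (i + a) b ∘ nds f i a := by
  induction b with
  | zero => rfl
  | succ b ih =>
    rw [← Nat.add_assoc, nds, ih, nds, Function.comp_assoc, Nat.add_assoc]

theorem nds_const (φ : X → X) (i n : ℕ) : nds (fun _ => φ) i n = φ^[n] := by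
  induction n with
  | zero => rfl
  | succ n ih => rw [nds, ih, Function.iterate_succ']

theorem nds_prod (f : ℕ → X → X) (g : ℕ → Y → Y) (i n : ℕ) (p : X × Y) :
    nds (fun k (q : X × Y) => (f k q.1, g k q.2)) i n p = (nds f i n p.1, nds g i n p.2) := by
  induction n with
  | zero => rfl
  | succ n ih => simp only [nds, Function.comp_apply, ih]

theorem nds_pi {ι : Type*} (F : ι → ℕ → X → X) (i n : ℕ) (x : ι → X) :
    nds (fun k (y : ι → X) j => F j k (y j)) i n x = fun j => nds (F j) i n (x j) := by
  induction n with
  | zero => rfl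
  | succ n ih => simp only [nds, Function.comp_apply, ih]

theorem nds_semiconj {f : ℕ → X → X} {g : ℕ → Y → Y} {π : X → Y}
    (h : ∀ k x, π (f k x) = g k (π x)) (i n : ℕ) (x : X) :
    π (nds f i n x) = nds g i n (π x) := by
  induction n with
  | zero => rfl
  | succ n ih => simp only [nds, Function.comp_apply, h, ih]

theorem continuous_nds [TopologicalSpace X] {f : ℕ → X → X}
    (hf : ∀ n, 1 ≤ n → Continuous (f n)) {i : ℕ} (hi : 1 ≤ i) (n : ℕ) :
    Continuous (nds f i n) := by
  induction n with
  | zero => exact continuous_id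
  | succ n ih => exact (hf (i + n) (by omega)).comp ih

end Iterates

section TimeChange

variable {X : Type*}

def blockNDS (f : ℕ → X → X) (c : ℕ) : ℕ → X → X :=
  fun k => nds f ((k - 1) * c + 1) c

def slowNDS (K : ℕ) (g : ℕ → X → X) : ℕ → X → X :=
  fun n => if K ∣ n then g (n / K) else id

theorem nds_blockNDS (f : ℕ → X → X) (c l : ℕ) :
    nds (blockNDS f c) 1 l = nds f 1 (l * c) := by
  induction l with
  | zero => simp only [nds, zero_mul]
  | succ l ih =>
    rw [nds, ih, blockNDS, Nat.add_sub_cancel_left, Nat.succ_mul, nds_add, Nat.add_comm 1]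

theorem nds_slowNDS (K : ℕ) (g : ℕ → X → X) (n : ℕ) :
    nds (slowNDS K g) 1 n = nds g 1 (n / K) := by
  induction n with
  | zero => simp only [nds, Nat.zero_div]
  | succ n ih =>
    rw [nds, ih, slowNDS, Nat.add_comm 1]
    by_cases hK : K ∣ n + 1
    · rw [if_pos hK, Nat.succ_div_of_dvd hK, nds, Nat.add_comm 1]
    · rw [if_neg hK, Nat.succ_div_of_not_dvd hK, Function.id_comp]

variable [TopologicalSpace X]

theorem continuous_blockNDS {f : ℕ → X → X} (hf : ∀ n, 1 ≤ n → Continuous (f n)) (c k : ℕ) :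
    Continuous (blockNDS f c k) :=
  continuous_nds hf (Nat.le_add_left 1 _) c

theorem continuous_slowNDS {g : ℕ → X → X} (hg : ∀ n, 1 ≤ n → Continuous (g n)) (K : ℕ)
    {n : ℕ} (hn : 1 ≤ n) : Continuous (slowNDS K g n) := by
  unfold slowNDS
  split_ifs with hK
  · exact hg _ (Nat.div_pos (Nat.le_of_dvd hn hK) (Nat.pos_of_dvd_of_pos hK hn))
  · exact continuous_id

end TimeChange

section Transitivity

variable {X Y : Type*} [TopologicalSpace X] [TopologicalSpace Y]

theorem ndsTransitive_of_subsingleton [Subsingleton X] (f : ℕ → X → X) : NDSTransitive f :=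
  fun _ _ _ ⟨x, hx⟩ _ ⟨y, hy⟩ => ⟨1, one_pos, y, ⟨x, hx, Subsingleton.elim _ _⟩, hy⟩

theorem NDSTransitive.of_semiconj {f : ℕ → X → X} {g : ℕ → Y → Y} {π : X → Y}
    (hπ : Continuous π) (hπs : Function.Surjective π) (h : ∀ k x, π (f k x) = g k (π x))
    (hf : NDSTransitive f) : NDSTransitive g := by
  intro U V hU hUne hV hVne
  obtain ⟨n, hn, _, ⟨x, hxU, rfl⟩, hxV⟩ :=
    hf _ _ (hU.preimage hπ) (hUne.preimage hπs) (hV.preimage hπ) (hVne.preimage hπs)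
  exact ⟨n, hn, π (nds f 1 n x), ⟨π x, hxU, (nds_semiconj h 1 n x).symm⟩, hxV⟩

theorem ndsTransitive_prod_iff (f : ℕ → X → X) (g : ℕ → Y → Y) :
    NDSTransitive (fun n (p : X × Y) => (f n p.1, g n p.2)) ↔
      ∀ U₁ V₁ : Set X, ∀ U₂ V₂ : Set Y, IsOpen U₁ → U₁.Nonempty → IsOpen V₁ → V₁.Nonempty →
        IsOpen U₂ → U₂.Nonempty → IsOpen V₂ → V₂.Nonempty →
        ∃ n, 0 < n ∧ (nds f 1 n '' U₁ ∩ V₁).Nonempty ∧ (nds g 1 n '' U₂ ∩ V₂).Nonempty := by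
  constructor
  · intro h U₁ V₁ U₂ V₂ hU₁ hU₁ne hV₁ hV₁ne hU₂ hU₂ne hV₂ hV₂ne
    obtain ⟨n, hn, _, ⟨p, hpU, rfl⟩, hpV⟩ :=
      h _ _ (hU₁.prod hU₂) (hU₁ne.prod hU₂ne) (hV₁.prod hV₂) (hV₁ne.prod hV₂ne)
    rw [nds_prod] at hpV
    exact ⟨n, hn, ⟨_, ⟨p.1, hpU.1, rfl⟩, hpV.1⟩, ⟨_, ⟨p.2, hpU.2, rfl⟩, hpV.2⟩⟩
  · intro h U V hU ⟨p, hp⟩ hV ⟨q, hq⟩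
    obtain ⟨U₁, U₂, hU₁, hU₂, hpU₁, hpU₂, hUsub⟩ := isOpen_prod_iff.1 hU p.1 p.2 hp
    obtain ⟨V₁, V₂, hV₁, hV₂, hqV₁, hqV₂, hVsub⟩ := isOpen_prod_iff.1 hV q.1 q.2 hq
    obtain ⟨n, hn, h₁, h₂⟩ :=
      h U₁ V₁ U₂ V₂ hU₁ ⟨_, hpU₁⟩ hV₁ ⟨_, hqV₁⟩ hU₂ ⟨_, hpU₂⟩ hV₂ ⟨_, hqV₂⟩
    obtain ⟨x, hxU, hxV⟩ := image_inter_nonempty_iff.1 h₁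
    obtain ⟨y, hyU, hyV⟩ := image_inter_nonempty_iff.1 h₂
    refine ⟨n, hn, _, ⟨(x, y), hUsub ⟨hxU, hyU⟩, rfl⟩, ?_⟩
    rw [nds_prod]
    exact hVsub ⟨hxV, hyV⟩

theorem NDSTransitive.exists_forall_pi {ι : Type*} [Finite ι] {F : ι → ℕ → X → X}
    (hF : NDSTransitive (fun k (x : ι → X) j => F j k (x j))) (U V : ι → Set X)
    (hU : ∀ j, IsOpen (U j)) (hUne : ∀ j, (U j).Nonempty)
    (hV : ∀ j, IsOpen (V j)) (hVne : ∀ j, (V j).Nonempty) :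
    ∃ n, 0 < n ∧ ∀ j, (nds (F j) 1 n '' U j ∩ V j).Nonempty := by
  obtain ⟨n, hn, _, ⟨x, hxU, rfl⟩, hxV⟩ :=
    hF (univ.pi U) (univ.pi V) (isOpen_set_pi finite_univ fun j _ => hU j)
      (univ_pi_nonempty_iff.2 hUne) (isOpen_set_pi finite_univ fun j _ => hV j)
      (univ_pi_nonempty_iff.2 hVne)
  rw [nds_pi] at hxV
  exact ⟨n, hn, fun j => ⟨_, ⟨x j, hxU j trivial, rfl⟩, hxV j trivial⟩⟩

open Fin.NatCast in
theorem NDSTransitive.slowNDS_prod_rotation {S : ℕ → X → X} (hS : NDSTransitive S)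
    (K : ℕ) [NeZero K] :
    NDSTransitive (fun n (p : X × Fin K) => (slowNDS K S n p.1, p.2 + 1)) := by
  intro U V hU ⟨⟨x₀, t₀⟩, h₀⟩ hV ⟨⟨x₁, t₁⟩, h₁⟩
  have hslice : ∀ t : Fin K, Continuous fun x : X => (x, t) := fun t =>
    continuous_id.prodMk continuous_const
  obtain ⟨l, hl, _, ⟨x, hxU, rfl⟩, hxV⟩ :=
    hS _ _ (hU.preimage (hslice t₀)) ⟨x₀, h₀⟩ (hV.preimage (hslice t₁)) ⟨x₁, h₁⟩
  -- the time `n = lK + r` is seen by `S` as time `l` and turns `t₀` into `t₁`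
  set r := (t₁ - t₀).val
  have hr : r < K := (t₁ - t₀).isLt
  have hdiv : (l * K + r) / K = l := by
    rw [Nat.add_comm, Nat.add_mul_div_right _ _ (NeZero.pos K), Nat.div_eq_of_lt hr, zero_add]
  have hrot : t₀ + ((l * K + r : ℕ) : Fin K) = t₁ := by
    rw [Nat.cast_add, Fin.natCast_eq_zero.2 (dvd_mul_left K l), zero_add, Fin.cast_val_eq_self,
      add_sub_cancel]
  refine ⟨l * K + r, Nat.add_pos_left (Nat.mul_pos hl (NeZero.pos K)) r, _,
    ⟨(x, t₀), hxU, rfl⟩, ?_⟩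
  rw [nds_prod (slowNDS K S) (fun _ t => t + 1), nds_slowNDS, nds_const, add_right_iterate,
    nsmul_one, hdiv]
  dsimp only
  rwa [hrot]

open Fin.NatCast in
theorem NDSTransitive.prod_blockNDS_of_prod_rotation {Z : Type*} [TopologicalSpace Z]
    {f : ℕ → X → X} {S : ℕ → Z → Z} {K : ℕ} [NeZero K]
    (h : NDSTransitive
      (fun n (p : X × (Z × Fin K)) => (f n p.1, slowNDS K S n p.2.1, p.2.2 + 1))) :
    NDSTransitive (fun n (p : X × Z) => (blockNDS f K n p.1, S n p.2)) := by
  rw [ndsTransitive_prod_iff]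
  intro U₁ V₁ U₂ V₂ hU₁ hU₁ne hV₁ hV₁ne hU₂ hU₂ne hV₂ hV₂ne
  obtain ⟨n, hn, hf, _, ⟨⟨z, t⟩, ⟨hzU, rfl : t = 0⟩, rfl⟩, hzV, hnK⟩ :=
    (ndsTransitive_prod_iff f fun n (q : Z × Fin K) => (slowNDS K S n q.1, q.2 + 1)).1 h
      U₁ V₁ (U₂ ×ˢ {0}) (V₂ ×ˢ {0}) hU₁ hU₁ne hV₁ hV₁ne
      (hU₂.prod (isOpen_discrete _)) (hU₂ne.prod (singleton_nonempty 0))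
      (hV₂.prod (isOpen_discrete _)) (hV₂ne.prod (singleton_nonempty 0))
  rw [nds_prod (slowNDS K S) (fun _ t => t + 1), nds_slowNDS, nds_const, add_right_iterate,
    nsmul_one] at hzV hnK
  -- the rotation coordinate returns to `0` only at multiples of `K`
  obtain ⟨l, rfl⟩ : K ∣ n := Fin.natCast_eq_zero.1 (by simpa using hnK)
  refine ⟨l, Nat.pos_of_mul_pos_left hn, ?_, _, ⟨z, hzU, rfl⟩, ?_⟩
  · rwa [nds_blockNDS, Nat.mul_comm]
  · rwa [Nat.mul_div_cancel_left l (NeZero.pos K)] at hzV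

end Transitivity

theorem NDSMildlyMixing.transitive_prod.{u, v, w} {X : Type u} [MetricSpace X]
    {f : ℕ → X → X} (hf : NDSMildlyMixing.{u, w} f) {Z : Type v} [TopologicalSpace Z]
    [CompactSpace Z] [TopologicalSpace.MetrizableSpace Z] {H : ℕ → Z → Z}
    (hHc : ∀ n, 1 ≤ n → Continuous (H n)) (hH : NDSTransitive H) :
    NDSTransitive (fun n (p : X × Z) => (f n p.1, H n p.2)) := by
  let := TopologicalSpace.metrizableSpaceMetric Z
  -- `hf` only tests spaces in the universe `w`: move `Z` there by its Kuratowski embedding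
  have hκ := kuratowskiEmbedding.isometry Z
  have : CompactSpace (range (kuratowskiEmbedding Z)) :=
    isCompact_iff_compactSpace.1 (isCompact_range hκ.continuous)
  let e : Z ≃ₜ ULift.{w} (range (kuratowskiEmbedding Z)) :=
    (Continuous.homeoOfEquivCompactToT2 (f := Equiv.ofInjective _ hκ.injective)
      (hκ.continuous.subtype_mk _)).trans Homeomorph.ulift.symm
  have hH' : NDSTransitive fun n => e ∘ H n ∘ e.symm :=
    hH.of_semiconj e.continuous e.surjective fun k x => by simp
  have hHc' n (hn : 1 ≤ n) : Continuous (e ∘ H n ∘ e.symm) :=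
    e.continuous.comp ((hHc n hn).comp e.symm.continuous)
  exact (hf _ _ hHc' hH').of_semiconj (π := Prod.map id e.symm)
    (continuous_id.prodMap e.symm.continuous) (Function.surjective_id.prodMap e.symm.surjective)
    fun k p => by simp

theorem ndsTransitive_pi_blockNDS {X : Type*} [MetricSpace X] [CompactSpace X]
    {f : ℕ → X → X} (hcont : ∀ n, 1 ≤ n → Continuous (f n)) (hf : NDSMildlyMixing f)
    (m : ℕ) {c : Fin m → ℕ} (hc : ∀ j, 0 < c j) :
    NDSTransitive (fun k (x : Fin m → X) j => blockNDS f (c j) k (x j)) := by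
  induction m with
  | zero => exact ndsTransitive_of_subsingleton _
  | succ m ih =>
    have : NeZero (c 0) := ⟨(hc 0).ne'⟩
    have hSc : ∀ n, Continuous fun (x : Fin m → X) j => blockNDS f (c j.succ) n (x j) :=
      fun n => continuous_pi fun j => (continuous_blockNDS hcont _ n).comp (continuous_apply j)
    have hP := (hf.transitive_prod
      (fun n hn => (continuous_slowNDS (fun n _ => hSc n) (c 0) hn).prodMap
        (continuous_add_const 1))
      ((ih fun j => hc j.succ).slowNDS_prod_rotation (c 0))).prod_blockNDS_of_prod_rotation
    refine hP.of_semiconj (π := fun p : X × (Fin m → X) => Fin.cons p.1 p.2)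
      (continuous_fst.finCons (A := fun _ => X) continuous_snd)
      (Fin.consEquiv fun _ => X).surjective fun k p => ?_
    funext j
    cases j using Fin.cases <;> rfl

theorem mildlyMixing_implies_multiTransitive {X : Type*} [MetricSpace X] [CompactSpace X]
    (f : ℕ → X → X) (hcont : ∀ n : ℕ, 1 ≤ n → Continuous (f n))
    (hmm : NDSMildlyMixing f) :
    NDSMultiTransitive f := by
  intro m _ U V hU hUne hV hVne
  obtain ⟨l, hl, hUV⟩ :=
    (ndsTransitive_pi_blockNDS hcont hmm m (c := fun j => j.1 + 1) fun j => j.1.succ_pos)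
      |>.exists_forall_pi U V hU hUne hV hVne
  exact ⟨l, hl, fun j => nds_blockNDS f (j.1 + 1) l ▸ hUV j⟩
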